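/- arXiv:1606.01409 — 6 statements merged into one kernel-verified Lean document; each statement's English description precedes it below -/
import Mathlib

section
/- Let M be a (not necessarily associative) algebra over ℚ with bilinear multiplication ⋆. Then ⋆ is alternative if and only if for all f,g,h ∈ M the associator equals one sixth of the jacobiator: A(f,g,h) = (1/6)·[f,g,h]. -/
/-!
Expanding the commutators writes the jacobiator as the signed sum of the associator over the six
permutations of its arguments. Alternativity says that the associator vanishes when its first two
or its last two arguments coincide; by polarization it is then alternating, so the signed sum is
six times the associator. Conversely, the signed sum vanishes whenever two arguments coincide, so
`A(f,g,h) = [f,g,h]/6` forces `A(f,f,g) = A(f,g,g) = 0`.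
-/

namespace NonAssoc

variable {R M : Type*} [CommRing R] [AddCommGroup M] [Module R M]
  (mul : M →ₗ[R] M →ₗ[R] M)

def associator (f g h : M) : M := mul f (mul g h) - mul (mul f g) h

def commutator (f g : M) : M := mul f g - mul g f

def jacobiator (f g h : M) : M :=
  commutator mul f (commutator mul g h) + commutator mul h (commutator mul f g) +
    commutator mul g (commutator mul h f)

def IsAlternative : Prop :=
  (∀ f g : M, mul f (mul f g) = mul (mul f f) g) ∧ (∀ f g : M, mul f (mul g g) = mul (mul f g) g)

theorem isAlternative_iff_associator :
    IsAlternative mul ↔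
      (∀ f g : M, associator mul f f g = 0) ∧ (∀ f g : M, associator mul f g g = 0) := by
  simp only [IsAlternative, associator, sub_eq_zero]

variable {mul}

theorem associator_add_left (f f' g h : M) :
    associator mul (f + f') g h = associator mul f g h + associator mul f' g h := by
  simp only [associator, map_add, LinearMap.add_apply]
  abel

theorem associator_add_middle (f g g' h : M) :
    associator mul f (g + g') h = associator mul f g h + associator mul f g' h := by
  simp only [associator, map_add, LinearMap.add_apply]
  abel

theorem associator_add_right (f g h h' : M) :
    associator mul f g (h + h') = associator mul f g h + associator mul f g h' := by
  simp only [associator, map_add]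
  abel

theorem associator_swap_left (hl : ∀ f g : M, associator mul f f g = 0) (f g h : M) :
    associator mul g f h = -associator mul f g h := by
  have polar := hl (f + g) h
  rw [associator_add_left, associator_add_middle, associator_add_middle, hl, hl] at polar
  linear_combination (norm := abel) polar

theorem associator_swap_right (hr : ∀ f g : M, associator mul f g g = 0) (f g h : M) :
    associator mul f h g = -associator mul f g h := by
  have polar := hr f (g + h)
  rw [associator_add_middle, associator_add_right, associator_add_right, hr, hr] at polar
  linear_combination (norm := abel) polar

variable (mul)

theorem jacobiator_eq_sum_associator (f g h : M) :
    jacobiator mul f g h =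
      associator mul f g h + associator mul g h f + associator mul h f g
        - associator mul g f h - associator mul f h g - associator mul h g f := by
  simp only [jacobiator, commutator, associator, map_sub, LinearMap.sub_apply]
  abel

theorem jacobiator_self_left (f g : M) : jacobiator mul f f g = 0 := by
  rw [jacobiator_eq_sum_associator]
  abel

theorem jacobiator_self_right (f g : M) : jacobiator mul f g g = 0 := by
  rw [jacobiator_eq_sum_associator]
  abel

variable {mul}

theorem jacobiator_eq_six_smul_associator (hl : ∀ f g : M, associator mul f f g = 0)
    (hr : ∀ f g : M, associator mul f g g = 0) (f g h : M) :
    jacobiator mul f g h = (6 : R) • associator mul f g h := by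
  have hgfh := associator_swap_left hl f g h
  have hfhg := associator_swap_right hr f g h
  have hghf : associator mul g h f = associator mul f g h := by
    rw [associator_swap_right hr, hgfh, neg_neg]
  have hhfg : associator mul h f g = associator mul f g h := by
    rw [associator_swap_left hl, hfhg, neg_neg]
  have hhgf : associator mul h g f = -associator mul f g h := by
    rw [associator_swap_left hl, hghf]
  rw [jacobiator_eq_sum_associator, hgfh, hfhg, hghf, hhfg, hhgf]
  module

end NonAssoc

open NonAssoc

/-- For a (not necessarily associative) algebra over ℚ with bilinear
multiplication `mul`, the multiplication is alternative iff the associator equals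
one sixth of the jacobiator. -/
theorem alternative_iff_associator_eq_sixth_jacobiator {M : Type*} [AddCommGroup M] [Module ℚ M]
    (mul : M →ₗ[ℚ] M →ₗ[ℚ] M)
    (A : M → M → M → M)
    (hA : ∀ f g h : M, A f g h = mul f (mul g h) - mul (mul f g) h)
    (br : M → M → M)
    (hbr : ∀ f g : M, br f g = mul f g - mul g f)
    (J : M → M → M → M)
    (hJ : ∀ f g h : M, J f g h = br f (br g h) + br h (br f g) + br g (br h f)) :
    ((∀ f g : M, mul f (mul f g) = mul (mul f f) g) ∧
     (∀ f g : M, mul f (mul g g) = mul (mul f g) g)) ↔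
    (∀ f g h : M, A f g h = (6 : ℚ)⁻¹ • J f g h) := by
  obtain rfl : A = associator mul := funext₃ hA
  obtain rfl : br = commutator mul := funext₂ hbr
  obtain rfl : J = jacobiator mul := funext₃ hJ
  refine (isAlternative_iff_associator mul).trans ⟨?_, fun hAJ => ⟨?_, ?_⟩⟩
  · rintro ⟨hl, hr⟩ f g h
    rw [jacobiator_eq_six_smul_associator hl hr, smul_smul, inv_mul_cancel₀ (by norm_num),
      one_smul]
  · intro f g
    rw [hAJ, jacobiator_self_left, smul_zero]
  · intro f g
    rw [hAJ, jacobiator_self_right, smul_zero]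
end

section
/- Let M be a (not necessarily associative) algebra over ℚ whose bilinear multiplication ⋆ is alternative. Then the commutator satisfies the Malcev identity: for all h,f,g ∈ M, [h,f,[h,g]] = [[h,f,g],h], where [f,g,h] denotes the jacobiator of the commutator. -/
/-!
In an alternative ring the associator `(x, y, z) = (x * y) * z - x * (y * z)` is alternating, so
the Jacobiator of the commutator, which is the alternating sum of the six permuted associators,
equals `-6 (x, y, z)`. The Malcev identity thus reduces to `(x, y, [x, z]) = [(x, y, z), x]`, the
difference of `(x, y, x * z) = (x, y, z) * x` and `(x, y, z * x) = x * (x, y, z)`; each of these is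
the sum of two instances of the Teichmüller identity `associator_cocycle`.
-/

class IsAlternative (A : Type*) [Mul A] : Prop where
  left_alternative (x y : A) : x * (x * y) = x * x * y
  right_alternative (x y : A) : x * (y * y) = x * y * y

abbrev LinearMap.toNonUnitalNonAssocRing {R M : Type*} [CommSemiring R] [AddCommGroup M]
    [Module R M] (mul : M →ₗ[R] M →ₗ[R] M) : NonUnitalNonAssocRing M where
  mul x y := mul x y
  left_distrib x y z := map_add (mul x) y z
  right_distrib x y z := LinearMap.map_add₂ mul x y z
  zero_mul x := LinearMap.map_zero₂ mul x
  mul_zero x := map_zero (mul x)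

section

variable {A : Type*} [NonUnitalNonAssocRing A]

def mulCommutator (x y : A) : A := x * y - y * x

def mulJacobiator (x y z : A) : A :=
  mulCommutator x (mulCommutator y z) + mulCommutator z (mulCommutator x y) +
    mulCommutator y (mulCommutator z x)

theorem mulJacobiator_eq_alternating_sum_associator (x y z : A) :
    mulJacobiator x y z = associator y x z + associator x z y + associator z y x -
      (associator x y z + associator y z x + associator z x y) := by
  simp only [mulJacobiator, mulCommutator, associator_apply, mul_sub, sub_mul]
  abel

theorem associator_add_add_left (x y z : A) :
    associator (x + y) (x + y) z =
      associator x x z + associator x y z + associator y x z + associator y y z := by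
  simp only [associator_apply, add_mul, mul_add]
  abel

theorem associator_right_add_add (x y z : A) :
    associator x (y + z) (y + z) =
      associator x y y + associator x y z + associator x z y + associator x z z := by
  simp only [associator_apply, add_mul, mul_add]
  abel

namespace IsAlternative

variable [IsAlternative A]

theorem associator_self_left (x y : A) : associator x x y = 0 := by
  rw [associator_apply, left_alternative, sub_self]

theorem associator_self_right (x y : A) : associator x y y = 0 := by
  rw [associator_apply, right_alternative, sub_self]

theorem associator_swap_left (x y z : A) : associator y x z = -associator x y z := by
  have h := associator_add_add_left x y z
  rw [associator_self_left, associator_self_left, associator_self_left, zero_add, add_zero] at h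
  exact eq_neg_of_add_eq_zero_right h.symm

theorem associator_swap_right (x y z : A) : associator x z y = -associator x y z := by
  have h := associator_right_add_add x y z
  rw [associator_self_right, associator_self_right, associator_self_right, zero_add,
    add_zero] at h
  exact eq_neg_of_add_eq_zero_right h.symm

theorem associator_cycle (x y z : A) : associator y z x = associator x y z := by
  rw [associator_swap_right, associator_swap_left, neg_neg]

theorem mulJacobiator_eq_neg_six_smul_associator (x y z : A) :
    mulJacobiator x y z = -(6 • associator x y z) := by
  rw [mulJacobiator_eq_alternating_sum_associator, associator_swap_left x y z,
    associator_swap_right x y z, associator_swap_left y z x, associator_cycle y z x,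
    associator_cycle x y z]
  abel

theorem associator_self_mul_right (x y z : A) :
    associator x y (x * z) = associator x y z * x := by
  have h1 := associator_cocycle y x x z
  have h2 := associator_cocycle z y x x
  simp only [associator_self_left, associator_self_right, mul_zero, zero_mul, sub_zero,
    zero_sub, add_zero] at h1 h2
  rw [associator_swap_left x y (x * z), associator_cycle z y (x * x),
    associator_cycle z (y * x) x] at h1
  rw [associator_swap_left y z x, associator_cycle x y z, neg_mul] at h2
  linear_combination (norm := abel) h1 + h2

theorem associator_mul_self_right (x y z : A) :
    associator x y (z * x) = x * associator x y z := by
  have h1 := associator_cocycle x x y z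
  have h2 := associator_cocycle z x x y
  simp only [associator_self_left, associator_self_right, mul_zero, zero_mul, sub_zero,
    zero_sub, add_zero] at h1 h2
  rw [← associator_cycle (z * x) x y, ← associator_cycle z (x * x) y,
    ← associator_cycle z x (x * y)] at h2
  linear_combination (norm := abel) -h1 - h2

theorem associator_mulCommutator_self_right (x y z : A) :
    associator x y (mulCommutator x z) = mulCommutator (associator x y z) x := by
  rw [mulCommutator, mulCommutator, ← associator_self_mul_right, ← associator_mul_self_right]
  simp only [associator_apply, mul_sub]
  abel

theorem mulJacobiator_mulCommutator_self (x y z : A) :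
    mulJacobiator x y (mulCommutator x z) = mulCommutator (mulJacobiator x y z) x := by
  rw [mulJacobiator_eq_neg_six_smul_associator, mulJacobiator_eq_neg_six_smul_associator,
    associator_mulCommutator_self_right]
  simp only [mulCommutator, neg_mul, mul_neg, smul_mul_assoc, mul_smul_comm, smul_sub, neg_sub,
    sub_neg_eq_add, neg_add_eq_sub]

end IsAlternative

end

/-- For an alternative bilinear multiplication on a ℚ-algebra, the
commutator satisfies the Malcev identity `[h,f,[h,g]] = [[h,f,g],h]`, where
`[·,·,·]` is the jacobiator of the commutator. -/
theorem alternative_commutator_malcev {M : Type*} [AddCommGroup M] [Module ℚ M]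
    (mul : M →ₗ[ℚ] M →ₗ[ℚ] M)
    (altL : ∀ f g : M, mul f (mul f g) = mul (mul f f) g)
    (altR : ∀ f g : M, mul f (mul g g) = mul (mul f g) g)
    (br : M → M → M)
    (hbr : ∀ f g : M, br f g = mul f g - mul g f)
    (J : M → M → M → M)
    (hJ : ∀ f g h : M, J f g h = br f (br g h) + br h (br f g) + br g (br h f)) :
    ∀ h f g : M, J h f (br h g) = br (J h f g) h := by
  let := mul.toNonUnitalNonAssocRing
  have : IsAlternative M := ⟨altL, altR⟩
  obtain rfl : br = mulCommutator := funext₂ hbr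
  obtain rfl : J = mulJacobiator := funext₃ hJ
  exact IsAlternative.mulJacobiator_mulCommutator_self
end

section
/- Let L be a module over a commutative ring equipped with a Malcev bracket [·,·], and let H,f,g ∈ L satisfy [f,H] = 0 and [g,H] = 0. Then the jacobiator J(H,f,g) commutes with H: [H, J(H,f,g)] = 0. -/
theorem malcev_jacobiator_is_integral_of_motion_general {R L : Type*} [CommRing R]
    [AddCommGroup L] [Module R L]
    (br : L →ₗ[R] L →ₗ[R] L)
    (hanti : ∀ x y : L, br x y = -br y x)
    (J : L → L → L → L)
    (hJ : ∀ f g h : L, J f g h = br f (br g h) + br h (br f g) + br g (br h f))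
    (hmalcev : ∀ h f g : L, J h f (br h g) = br (J h f g) h)
    (H f g : L) (hg : br g H = 0) :
    br H (J H f g) = 0 := by
  have hHg : br H g = 0 := by rw [hanti, hg, neg_zero]
  have hJ_zero : J H f 0 = 0 := by simp [hJ]
  have hJ_comm : br (J H f g) H = 0 := by rw [← hmalcev, hHg, hJ_zero]
  rw [hanti, hJ_comm, neg_zero]

/-- For a Malcev bracket on a module, if `[f,H] = 0` and `[g,H] = 0`,
then the jacobiator `J(H,f,g)` commutes with `H`. -/
theorem malcev_jacobiator_is_integral_of_motion {R L : Type*} [CommRing R]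
    [AddCommGroup L] [Module R L]
    (br : L →ₗ[R] L →ₗ[R] L)
    (hanti : ∀ x y : L, br x y = -br y x)
    (J : L → L → L → L)
    (hJ : ∀ f g h : L, J f g h = br f (br g h) + br h (br f g) + br g (br h f))
    (hmalcev : ∀ h f g : L, J h f (br h g) = br (J h f g) h)
    (H f g : L) (hf : br f H = 0) (hg : br g H = 0) :
    br H (J H f g) = 0 :=
  malcev_jacobiator_is_integral_of_motion_general br hanti J hJ hmalcev H f g hg
end

section
/- Let L be a module over a commutative ring R equipped with a Malcev bracket [·,·], and let H,f,g ∈ L satisfy [f,H] = 0 and [g,H] = 0. Then for every scalar t ∈ R the modified bracket {f,g}_H := [f,g] − t·J(H,f,g) satisfies the conservation identity −J(H,f,g) + [H, [f,g] − t·J(H,f,g)] = 0; equivalently, [H,[f,g]] = J(H,f,g) and [H,J(H,f,g)] = 0. -/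
/-! Since `H` commutes with `f` and `g`, two of the three terms of `J(H,f,g)` vanish, leaving
`J(H,f,g) = [H,[f,g]]`. The Malcev identity with `[H,g] = 0` gives
`[J(H,f,g),H] = J(H,f,[H,g]) = J(H,f,0) = 0`. Hence `[H, [f,g] - t • J(H,f,g)] = J(H,f,g)`
for every `t`. -/

namespace LinearMap

section Jacobiator

variable {R L : Type*} [CommSemiring R] [AddCommMonoid L] [Module R L]
  (br : L →ₗ[R] L →ₗ[R] L)

def jacobiator (f g h : L) : L :=
  br f (br g h) + br h (br f g) + br g (br h f)

def IsMalcev : Prop :=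
  ∀ h f g : L, jacobiator br h f (br h g) = br (jacobiator br h f g) h

variable {br}

@[simp]
theorem jacobiator_zero_right (f g : L) : jacobiator br f g 0 = 0 := by
  simp [jacobiator]

theorem jacobiator_eq_of_bracket_eq_zero {H f g : L} (hf : br H f = 0) (hg : br g H = 0) :
    jacobiator br H f g = br H (br f g) := by
  simp [jacobiator, hf, hg]

theorem IsMalcev.bracket_jacobiator_eq_zero (hbr : IsMalcev br) {H g : L} (f : L)
    (hg : br H g = 0) : br (jacobiator br H f g) H = 0 := by
  rw [← hbr, hg, jacobiator_zero_right]

end Jacobiator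

end LinearMap

open LinearMap in
/-- For a Malcev bracket, if `[f,H] = 0` and `[g,H] = 0`, then for
every scalar `t` the modified bracket `{f,g}_H = [f,g] - t • J(H,f,g)` satisfies
the conservation identity; equivalently `[H,[f,g]] = J(H,f,g)` and
`[H,J(H,f,g)] = 0`. -/
theorem malcev_modified_bracket_conserved {R L : Type*} [CommRing R]
    [AddCommGroup L] [Module R L]
    (br : L →ₗ[R] L →ₗ[R] L)
    (hanti : ∀ x y : L, br x y = -br y x)
    (J : L → L → L → L)
    (hJ : ∀ f g h : L, J f g h = br f (br g h) + br h (br f g) + br g (br h f))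
    (hmalcev : ∀ h f g : L, J h f (br h g) = br (J h f g) h)
    (H f g : L) (hf : br f H = 0) (hg : br g H = 0) :
    (∀ t : R, -J H f g + br H (br f g - t • J H f g) = 0) ∧
    br H (br f g) = J H f g ∧ br H (J H f g) = 0 := by
  obtain rfl : J = jacobiator br := funext₃ hJ
  have hHf : br H f = 0 := by rw [hanti, hf, neg_zero]
  have hHg : br H g = 0 := by rw [hanti, hg, neg_zero]
  have hbrfg : br H (br f g) = jacobiator br H f g :=
    (jacobiator_eq_of_bracket_eq_zero hHf hg).symm
  have hbrJ : br H (jacobiator br H f g) = 0 := by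
    rw [hanti, IsMalcev.bracket_jacobiator_eq_zero hmalcev f hHg, neg_zero]
  refine ⟨fun t => ?_, hbrfg, hbrJ⟩
  rw [map_sub, map_smul, hbrfg, hbrJ, smul_zero, sub_zero, neg_add_cancel]
end

section
/- For all p,q ∈ ℝ⁷ with |p| ≤ 1 and |q| ≤ 1, the vector star product satisfies 1 − |p⊛q|² = (√(1−|p|²)·√(1−|q|²) − p·q)². In particular |p⊛q| ≤ 1, so the vector star product maps the closed unit ball of ℝ⁷ to itself. -/
open Finset

/-- The 0-indexed positive triples of the 7-dimensional epsilon tensor,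
corresponding to the 1-indexed triples (1,2,3), (1,4,5), (1,7,6), (2,4,6),
(2,5,7), (3,4,7), (3,6,5). -/
def octTriples : List (Fin 7 × Fin 7 × Fin 7) :=
  [(0, 1, 2), (0, 3, 4), (0, 6, 5), (1, 3, 5), (1, 4, 6), (2, 3, 6), (2, 5, 4)]

/-- The totally antisymmetric tensor `ε` on triples of indices in `Fin 7`:
`+1` on the listed triples and their cyclic permutations, `-1` on the odd
permutations thereof, and `0` otherwise. -/
def eps (i j k : Fin 7) : ℝ :=
  if (i, j, k) ∈ octTriples ∨ (j, k, i) ∈ octTriples ∨ (k, i, j) ∈ octTriples then 1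
  else if (j, i, k) ∈ octTriples ∨ (i, k, j) ∈ octTriples ∨ (k, j, i) ∈ octTriples then -1
  else 0

/-- The Levi-Civita symbol in seven dimensions: the sign of the permutation
`(a 0, …, a 6)` of `(0, …, 6)`, and `0` if the indices are not distinct.
In particular `eps7 ![0,1,2,3,4,5,6] = 1`. -/
noncomputable def eps7 (a : Fin 7 → Fin 7) : ℝ :=
  if h : Function.Bijective a then ((Equiv.Perm.sign (Equiv.ofBijective a h) : ℤ) : ℝ) else 0

/-- The rank-four tensor `ε4_{ijlm} = (1/6) Σ_{k,p,r} ε7_{ijlmkpr} ε_{kpr}`. -/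
noncomputable def eps4 (i j l m : Fin 7) : ℝ :=
  (1 / 6) * ∑ k : Fin 7, ∑ p : Fin 7, ∑ r : Fin 7, eps7 ![i, j, l, m, k, p, r] * eps k p r

/-- The Euclidean dot product on `ℝ⁷`. -/
def dot (u v : Fin 7 → ℝ) : ℝ := ∑ i : Fin 7, u i * v i

/-- The 7-dimensional cross product, `(u × v)_i = Σ_{j,k} ε_{ijk} u_j v_k`. -/
noncomputable def cross (u v : Fin 7 → ℝ) : Fin 7 → ℝ :=
  fun i => ∑ j : Fin 7, ∑ k : Fin 7, eps i j k * u j * v k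

/-- `c(p,q) = √(1-|p|²)·√(1-|q|²) - p·q`. -/
noncomputable def cfun (p q : Fin 7 → ℝ) : ℝ :=
  Real.sqrt (1 - dot p p) * Real.sqrt (1 - dot q q) - dot p q

/-- The sign `ε(p,q)`: `1` if `c(p,q) ≥ 0` and `-1` otherwise. -/
noncomputable def sgn (p q : Fin 7 → ℝ) : ℝ := if 0 ≤ cfun p q then 1 else -1

/-- The vector star product
`p ⊛ q = ε(p,q)·(√(1-|p|²) q + √(1-|q|²) p - p×q)`. -/
noncomputable def vstar (p q : Fin 7 → ℝ) : Fin 7 → ℝ :=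
  sgn p q • (Real.sqrt (1 - dot p p) • q + Real.sqrt (1 - dot q q) • p - cross p q)


/-!
The cross product is orthogonal to both factors and satisfies Lagrange's identity
`|p × q|² = |p|²|q|² - (p·q)²`. Hence, writing `a = √(1-|p|²)` and `b = √(1-|q|²)`, the
three summands of `p ⊛ q` contribute `a²|q|² + b²|p|² + 2ab (p·q) + |p|²|q|² - (p·q)²` to
`|p ⊛ q|²`, and `1` minus this is exactly `(ab - p·q)²`.
-/

lemma cross_eq (u v : Fin 7 → ℝ) : cross u v =
    ![u 1 * v 2 - u 2 * v 1 + u 3 * v 4 - u 4 * v 3 - u 5 * v 6 + u 6 * v 5,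
      u 2 * v 0 - u 0 * v 2 + u 3 * v 5 - u 5 * v 3 + u 4 * v 6 - u 6 * v 4,
      u 0 * v 1 - u 1 * v 0 + u 3 * v 6 - u 6 * v 3 + u 5 * v 4 - u 4 * v 5,
      u 4 * v 0 - u 0 * v 4 + u 5 * v 1 - u 1 * v 5 + u 6 * v 2 - u 2 * v 6,
      u 0 * v 3 - u 3 * v 0 + u 2 * v 5 - u 5 * v 2 + u 6 * v 1 - u 1 * v 6,
      u 0 * v 6 - u 6 * v 0 + u 1 * v 3 - u 3 * v 1 + u 4 * v 2 - u 2 * v 4,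
      u 5 * v 0 - u 0 * v 5 + u 1 * v 4 - u 4 * v 1 + u 2 * v 3 - u 3 * v 2] := by
  funext i
  fin_cases i <;> simp [cross, eps, octTriples, Fin.sum_univ_seven] <;> ring

lemma dot_cross_self_left (p q : Fin 7 → ℝ) : dot p (cross p q) = 0 := by
  simp only [dot, cross_eq, Fin.sum_univ_seven, Matrix.cons_val_zero, Matrix.cons_val_one,
    Matrix.cons_val]
  ring

lemma dot_cross_self_right (p q : Fin 7 → ℝ) : dot q (cross p q) = 0 := by
  simp only [dot, cross_eq, Fin.sum_univ_seven, Matrix.cons_val_zero, Matrix.cons_val_one,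
    Matrix.cons_val]
  ring

lemma cross_dot_cross_self (p q : Fin 7 → ℝ) :
    dot (cross p q) (cross p q) = dot p p * dot q q - dot p q ^ 2 := by
  simp only [dot, cross_eq, Fin.sum_univ_seven, Matrix.cons_val_zero, Matrix.cons_val_one,
    Matrix.cons_val]
  ring

lemma sgn_sq (p q : Fin 7 → ℝ) : sgn p q ^ 2 = 1 := by
  unfold sgn
  split_ifs <;> norm_num

lemma dot_self_smul_add_sub_of_dot_eq_zero {s : ℝ} (hs : s ^ 2 = 1) (a b : ℝ)
    {p q c : Fin 7 → ℝ} (hpc : dot p c = 0) (hqc : dot q c = 0) :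
    dot (s • (a • q + b • p - c)) (s • (a • q + b • p - c)) =
      a ^ 2 * dot q q + b ^ 2 * dot p p + 2 * a * b * dot p q + dot c c := by
  have expand : dot (s • (a • q + b • p - c)) (s • (a • q + b • p - c)) =
      s ^ 2 * (a ^ 2 * dot q q + b ^ 2 * dot p p + 2 * a * b * dot p q
        - 2 * a * dot q c - 2 * b * dot p c + dot c c) := by
    simp only [dot, Fin.sum_univ_seven, Pi.smul_apply, Pi.add_apply, Pi.sub_apply, smul_eq_mul]
    ring
  rw [expand, hs, hpc, hqc]
  ring

lemma one_sub_dot_vstar_self {p q : Fin 7 → ℝ} (hp : dot p p ≤ 1) (hq : dot q q ≤ 1) :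
    1 - dot (vstar p q) (vstar p q) = cfun p q ^ 2 := by
  have ha : √(1 - dot p p) ^ 2 = 1 - dot p p := Real.sq_sqrt (by linarith)
  have hb : √(1 - dot q q) ^ 2 = 1 - dot q q := Real.sq_sqrt (by linarith)
  rw [vstar, dot_self_smul_add_sub_of_dot_eq_zero (sgn_sq p q) _ _ (dot_cross_self_left p q)
    (dot_cross_self_right p q), cross_dot_cross_self, cfun, sub_sq, mul_pow, ha, hb]
  ring

/-- for `p, q` in the closed unit ball of ℝ⁷ one has
`1 - |p⊛q|² = c(p,q)²`; in particular `|p⊛q| ≤ 1`, so the vector star product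
maps the closed unit ball to itself. -/
theorem vstar_unit_ball (p q : Fin 7 → ℝ) (hp : dot p p ≤ 1) (hq : dot q q ≤ 1) :
    1 - dot (vstar p q) (vstar p q) = (cfun p q) ^ 2 ∧
    dot (vstar p q) (vstar p q) ≤ 1 := by
  have h := one_sub_dot_vstar_self hp hq
  exact ⟨h, by linarith [sq_nonneg (cfun p q)]⟩
end

section
/- Let M be a (not necessarily associative) algebra over ℝ with bilinear multiplication ⋆ whose associator A(f,g,h) = f⋆(g⋆h) − (f⋆g)⋆h is totally antisymmetric, and let τ : M → ℝ be a linear functional satisfying the closedness condition τ(f⋆g) = τ(g⋆f) for all f,g ∈ M. Then the integrated associator vanishes: τ((f⋆g)⋆h) = τ(f⋆(g⋆h)) for all f,g,h ∈ M. -/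
/-!
Total antisymmetry makes the associator invariant under cyclic permutations, so
`τ (A f g h)` is a third of the cyclic sum `τ (A f g h) + τ (A g h f) + τ (A h f g)`.
Expanding that sum, closedness `τ (a ⋆ b) = τ (b ⋆ a)` cancels its six terms in pairs.
-/

def associatorOf {M : Type*} [Sub M] (mul : M → M → M) (f g h : M) : M :=
  mul f (mul g h) - mul (mul f g) h

theorem cyclic_of_antisymm {α β : Type*} [InvolutiveNeg β] {A : α → α → α → β}
    (hanti1 : ∀ f g h, A f g h = -A g f h) (hanti2 : ∀ f g h, A f g h = -A f h g)
    (f g h : α) : A f g h = A g h f := by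
  rw [hanti1, hanti2, neg_neg]

theorem map_associatorOf_cyclic_sum_eq_zero {M G F : Type*} [AddCommGroup M] [AddCommGroup G]
    [FunLike F M G] [AddMonoidHomClass F M G] (mul : M → M → M) (τ : F)
    (hclosed : ∀ f g, τ (mul f g) = τ (mul g f)) (f g h : M) :
    τ (associatorOf mul f g h) + τ (associatorOf mul g h f) + τ (associatorOf mul h f g) = 0 := by
  simp only [associatorOf, map_sub]
  rw [hclosed f, hclosed g, hclosed h]
  abel

/-- For an ℝ-algebra with a totally antisymmetric associator and a
closed linear functional `τ` (i.e. `τ(f⋆g) = τ(g⋆f)`), the integrated associator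
vanishes: `τ((f⋆g)⋆h) = τ(f⋆(g⋆h))`. -/
theorem integrated_associator_vanishes {M : Type*} [AddCommGroup M] [Module ℝ M]
    (mul : M →ₗ[ℝ] M →ₗ[ℝ] M)
    (A : M → M → M → M)
    (hA : ∀ f g h : M, A f g h = mul f (mul g h) - mul (mul f g) h)
    (hanti1 : ∀ f g h : M, A f g h = -A g f h)
    (hanti2 : ∀ f g h : M, A f g h = -A f h g)
    (τ : M →ₗ[ℝ] ℝ)
    (hclosed : ∀ f g : M, τ (mul f g) = τ (mul g f)) :
    ∀ f g h : M, τ (mul (mul f g) h) = τ (mul f (mul g h)) := by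
  intro f g h
  have hA' : A = associatorOf (fun a b => mul a b) := by
    funext a b c
    exact hA a b c
  have hcyc := cyclic_of_antisymm hanti1 hanti2
  have hsum := map_associatorOf_cyclic_sum_eq_zero (fun a b => mul a b) τ hclosed f g h
  rw [← hA', ← hcyc g h f, ← hcyc f g h] at hsum
  have hzero : τ (A f g h) = 0 := by linarith
  rw [hA, map_sub, sub_eq_zero] at hzero
  exact hzero.symm
end
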